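/- arXiv:2509.15430 — 3 statements merged into one kernel-verified Lean document; each statement's English description precedes it below -/
import Mathlib

section
/- If F is L-Lipschitz, G satisfies the Hölderian error bound dist(θ,S₀) ≤ c·p(θ)^{1/α} with α > 1, F is bounded below by m and above on S₀ by M, and w₂ is chosen so that (w₁(M−m)+ε)/w₂ ≤ δ, then any ε-optimal solution θ̂ of min_θ w₁F(θ)+w₂(G(θ)−inf G) satisfies both p(θ̂) ≤ δ and F(θ̂) ≤ inf_{θ ∈ S_δ} F(θ) + ε/w₁ + 2L·c·δ^{1/α}, where S_δ = {θ : p(θ) ≤ δ}. -/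
open Real Set

/-- Combined penalty theorem: under the Hölderian error bound and a suitable penalty
constant, an ε-optimal solution of the penalized problem is approximately feasible and
approximately optimal for the relaxed bilevel problem. -/
theorem stmt_4 (n : ℕ) (F G : EuclideanSpace ℝ (Fin n) → ℝ)
    (hG : BddBelow (Set.range G))
    (S₀ : Set (EuclideanSpace ℝ (Fin n)))
    (hS₀ : S₀ = {θ | G θ - sInf (Set.range G) = 0})
    (hS₀ne : S₀.Nonempty)
    (L : ℝ) (hL : 0 ≤ L) (hFLip : ∀ a b, |F a - F b| ≤ L * ‖a - b‖)
    (c α : ℝ) (hc : 0 < c) (hα : 1 < α)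
    (hHolder : ∀ θ, Metric.infDist θ S₀ ≤ c * (G θ - sInf (Set.range G)) ^ (1 / α))
    (m M : ℝ) (hm : ∀ θ, m ≤ F θ) (hM : ∀ θ ∈ S₀, F θ ≤ M)
    (w₁ w₂ : ℝ) (hw₁ : 0 < w₁) (hw₂ : 0 < w₂) (ε : ℝ) (hε : 0 ≤ ε)
    (δ : ℝ) (hδ : 0 < δ) (hpen : (w₁ * (M - m) + ε) / w₂ ≤ δ)
    (θhat : EuclideanSpace ℝ (Fin n))
    (hopt : ∀ θ, w₁ * F θhat + w₂ * (G θhat - sInf (Set.range G)) ≤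
      w₁ * F θ + w₂ * (G θ - sInf (Set.range G)) + ε) :
    G θhat - sInf (Set.range G) ≤ δ ∧
      ∀ θ, G θ - sInf (Set.range G) ≤ δ →
        F θhat ≤ F θ + ε / w₁ + 2 * L * c * δ ^ (1 / α) := by
  have hp : ∀ θ, 0 ≤ G θ - sInf (Set.range G) := by
    intro θ
    have := csInf_le hG ⟨θ, rfl⟩
    linarith
  obtain ⟨θ₀, hθ₀⟩ := hS₀ne
  have hp₀ : G θ₀ - sInf (Set.range G) = 0 := by
    have := hθ₀; rw [hS₀] at this; exact this
  -- Part 1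
  have h1 : G θhat - sInf (Set.range G) ≤ δ := by
    have h := hopt θ₀
    rw [hp₀] at h
    have hF₀ : F θ₀ ≤ M := hM θ₀ hθ₀
    have hmθ : m ≤ F θhat := hm θhat
    have hpen' : w₁ * (M - m) + ε ≤ δ * w₂ := by
      rw [div_le_iff₀ hw₂] at hpen; linarith
    nlinarith [hp θhat]
  refine ⟨h1, ?_⟩
  intro θ hθδ
  -- find θ' in S₀ close to θ
  have hpow : (G θ - sInf (Set.range G)) ^ (1 / α) ≤ δ ^ (1 / α) :=
    Real.rpow_le_rpow (hp θ) hθδ (by positivity)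
  have hid : Metric.infDist θ S₀ ≤ c * δ ^ (1 / α) :=
    le_trans (hHolder θ) (by nlinarith)
  have hδpow : 0 < δ ^ (1 / α) := Real.rpow_pos_of_pos hδ _
  have hlt : Metric.infDist θ S₀ < c * δ ^ (1 / α) + c * δ ^ (1 / α) := by
    nlinarith
  obtain ⟨θ', hθ'S, hθ'd⟩ := (Metric.infDist_lt_iff ⟨θ₀, hθ₀⟩).mp hlt
  have hpθ' : G θ' - sInf (Set.range G) = 0 := by
    have := hθ'S; rw [hS₀] at this; exact this
  -- F θhat ≤ F θ' + ε / w₁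
  have h2 : F θhat ≤ F θ' + ε / w₁ := by
    have h := hopt θ'
    rw [hpθ'] at h
    nlinarith [hp θhat, mul_nonneg hw₂.le (hp θhat),
      div_mul_cancel₀ ε hw₁.ne']
  -- Lipschitz
  have h3 : F θ' ≤ F θ + L * ‖θ' - θ‖ := by
    have := hFLip θ' θ
    have := abs_le.mp this
    linarith [this.2]
  have hnorm : ‖θ' - θ‖ ≤ 2 * (c * δ ^ (1 / α)) := by
    have : dist θ θ' = ‖θ' - θ‖ := by rw [dist_eq_norm, norm_sub_rev]
    linarith [hθ'd.le, this ▸ hθ'd.le]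
  nlinarith [mul_le_mul_of_nonneg_left hnorm hL]
end

section
/- (Gumbel-max trick) Let s ∈ ℝ^N and let v₁,…,v_N be i.i.d. standard Gumbel random variables (CDF t ↦ exp(−exp(−t))). Then for each index j, P(argmax_n (s_n + v_n) = j) = exp(s_j) / Σ_m exp(s_m), i.e., the argmax of Gumbel-perturbed scores is distributed according to the softmax of s. -/
/-!
With `F t = exp (-exp (-t))` the Gumbel CDF, the shift rule `F (t + b) = F t ^ exp (-b)` makes
the conditional probability that `v j = t` beats all other perturbed scores equal to
`∏_{n ≠ j} F (t + s j - s n) = F t ^ c` with `c = ∑_{n ≠ j} exp (s n - s j)`. Since `F (v j)` is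
uniform on `(0, 1)`, averaging over `t` gives `∫₀¹ u ^ c du = 1 / (c + 1)`, which is the softmax
weight of `j`.
-/

open MeasureTheory ProbabilityTheory Real Finset

noncomputable def gumbelCDF (t : ℝ) : ℝ := exp (-exp (-t))

noncomputable def gumbelQuantile (u : ℝ) : ℝ := -log (-log u)

noncomputable def gumbelMeasure : Measure ℝ :=
  (volume.restrict (Set.Ioo (0 : ℝ) 1)).map gumbelQuantile

lemma strictMono_gumbelCDF : StrictMono gumbelCDF := fun _ _ h => by
  unfold gumbelCDF; gcongr

lemma gumbelCDF_pos (t : ℝ) : 0 < gumbelCDF t := exp_pos _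

lemma gumbelCDF_lt_one (t : ℝ) : gumbelCDF t < 1 := by
  simpa [gumbelCDF] using exp_pos (-t)

lemma gumbelCDF_add (t b : ℝ) : gumbelCDF (t + b) = gumbelCDF t ^ exp (-b) := by
  rw [gumbelCDF, gumbelCDF, ← exp_mul, neg_add, exp_add]
  ring_nf

lemma gumbelCDF_gumbelQuantile {u : ℝ} (hu : u ∈ Set.Ioo (0 : ℝ) 1) :
    gumbelCDF (gumbelQuantile u) = u := by
  have : 0 < -log u := neg_pos.mpr (log_neg hu.1 hu.2)
  rw [gumbelCDF, gumbelQuantile, neg_neg, exp_log this, neg_neg, exp_log hu.1]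

lemma measurable_gumbelQuantile : Measurable gumbelQuantile := by
  unfold gumbelQuantile; fun_prop

lemma Ioo_inter_preimage_gumbelQuantile {I J : Set ℝ} (hJ : J ⊆ Set.Ioo 0 1)
    (hIJ : ∀ t, t ∈ I ↔ gumbelCDF t ∈ J) :
    Set.Ioo 0 1 ∩ gumbelQuantile ⁻¹' I = J := by
  ext u
  refine ⟨fun ⟨hu, hI⟩ => ?_, fun h => ⟨hJ h, ?_⟩⟩
  · rwa [Set.mem_preimage, hIJ, gumbelCDF_gumbelQuantile hu] at hI
  · rwa [Set.mem_preimage, hIJ, gumbelCDF_gumbelQuantile (hJ h)]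

lemma gumbelMeasure_apply {I : Set ℝ} (hI : MeasurableSet I) :
    gumbelMeasure I = volume (Set.Ioo 0 1 ∩ gumbelQuantile ⁻¹' I) := by
  rw [gumbelMeasure, Measure.map_apply measurable_gumbelQuantile hI,
    Measure.restrict_apply' measurableSet_Ioo, Set.inter_comm]

lemma gumbelMeasure_Iic (a : ℝ) : gumbelMeasure (Set.Iic a) = ENNReal.ofReal (gumbelCDF a) := by
  rw [gumbelMeasure_apply measurableSet_Iic,
    Ioo_inter_preimage_gumbelQuantile (Set.Ioc_subset_Ioo_right (gumbelCDF_lt_one a))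
      fun t => by simp [gumbelCDF_pos, strictMono_gumbelCDF.le_iff_le],
    Real.volume_Ioc, sub_zero]

lemma gumbelMeasure_Iio (a : ℝ) : gumbelMeasure (Set.Iio a) = ENNReal.ofReal (gumbelCDF a) := by
  rw [gumbelMeasure_apply measurableSet_Iio,
    Ioo_inter_preimage_gumbelQuantile (Set.Ioo_subset_Ioo_right (gumbelCDF_lt_one a).le)
      fun t => by simp [gumbelCDF_pos, strictMono_gumbelCDF.lt_iff_lt],
    Real.volume_Ioo, sub_zero]

instance : IsProbabilityMeasure gumbelMeasure :=
  ⟨by simp [gumbelMeasure_apply MeasurableSet.univ]⟩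

lemma lintegral_rpow_Ioo_zero_one {c : ℝ} (hc : 0 ≤ c) :
    ∫⁻ u in Set.Ioo 0 1, ENNReal.ofReal (u ^ c) = ENNReal.ofReal (1 / (c + 1)) := by
  have hint : IntegrableOn (fun u : ℝ => u ^ c) (Set.Ioc 0 1) :=
    (intervalIntegrable_iff_integrableOn_Ioc_of_le zero_le_one).mp
      (intervalIntegral.intervalIntegrable_rpow' (by linarith))
  rw [← ofReal_integral_eq_lintegral_ofReal (hint.mono_set Set.Ioo_subset_Ioc_self)
    ((ae_restrict_mem measurableSet_Ioo).mono fun u hu => rpow_nonneg hu.1.le c),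
    ← integral_Ioc_eq_integral_Ioo, ← intervalIntegral.integral_of_le zero_le_one,
    integral_rpow (Or.inl (by linarith)), one_rpow, zero_rpow (by linarith)]
  ring_nf

lemma lintegral_gumbelCDF_rpow {c : ℝ} (hc : 0 ≤ c) :
    ∫⁻ t, ENNReal.ofReal (gumbelCDF t ^ c) ∂gumbelMeasure = ENNReal.ofReal (1 / (c + 1)) := by
  rw [gumbelMeasure, lintegral_map (by unfold gumbelCDF; fun_prop) measurable_gumbelQuantile,
    ← lintegral_rpow_Ioo_zero_one hc]
  exact setLIntegral_congr_fun measurableSet_Ioo fun u hu => by rw [gumbelCDF_gumbelQuantile hu]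

theorem map_eq_gumbelMeasure {Ω : Type*} [MeasurableSpace Ω] {P : Measure Ω}
    [IsProbabilityMeasure P] {X : Ω → ℝ} (hX : Measurable X)
    (hcdf : ∀ t, P {ω | X ω ≤ t} = ENNReal.ofReal (gumbelCDF t)) :
    P.map X = gumbelMeasure := by
  have := Measure.isProbabilityMeasure_map (μ := P) hX.aemeasurable
  refine Measure.ext_of_Iic _ _ fun a => ?_
  rw [Measure.map_apply hX measurableSet_Iic, gumbelMeasure_Iic]
  exact hcdf a

lemma measurableSet_setOf_forall_succAbove_lt {n : ℕ} (j : Fin (n + 1)) (b : Fin n → ℝ) :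
    MeasurableSet {x : Fin (n + 1) → ℝ | ∀ k, x (j.succAbove k) < x j + b k} := by
  simp only [Set.ofPred_forall]
  exact .iInter fun k => measurableSet_lt (by fun_prop) (by fun_prop)

namespace MeasureTheory.Measure

theorem pi_setOf_forall_succAbove_lt {n : ℕ} (μ : Fin (n + 1) → Measure ℝ)
    [∀ i, SigmaFinite (μ i)] (j : Fin (n + 1)) (b : Fin n → ℝ) :
    Measure.pi μ {x | ∀ k, x (j.succAbove k) < x j + b k} =
      ∫⁻ t, ∏ k, μ (j.succAbove k) (Set.Iio (t + b k)) ∂μ j := by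
  have hT : MeasurableSet {p : ℝ × (Fin n → ℝ) | ∀ k, p.2 k < p.1 + b k} := by
    simp only [Set.ofPred_forall]
    exact .iInter fun k => measurableSet_lt (by fun_prop) (by fun_prop)
  rw [← (measurePreserving_piFinSuccAbove μ j).symm.measure_preimage
    (measurableSet_setOf_forall_succAbove_lt j b).nullMeasurableSet]
  have hpre : (MeasurableEquiv.piFinSuccAbove (fun _ => ℝ) j).symm ⁻¹'
      {x | ∀ k, x (j.succAbove k) < x j + b k} = {p | ∀ k, p.2 k < p.1 + b k} := by
    ext ⟨t, y⟩
    simp [MeasurableEquiv.piFinSuccAbove_symm_apply]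
  rw [hpre, Measure.prod_apply hT]
  refine lintegral_congr fun t => ?_
  rw [← Measure.pi_pi]
  congr 1
  ext y
  simp

end MeasureTheory.Measure

lemma prod_gumbelCDF_add {ι : Type*} (s : Finset ι) (t : ℝ) (b : ι → ℝ) :
    ∏ k ∈ s, gumbelCDF (t + b k) = gumbelCDF t ^ ∑ k ∈ s, exp (-b k) := by
  rw [rpow_sum_of_pos (gumbelCDF_pos t)]
  exact prod_congr rfl fun k _ => gumbelCDF_add t (b k)

lemma exp_div_sum_exp_eq {n : ℕ} (s : Fin (n + 1) → ℝ) (j : Fin (n + 1)) :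
    exp (s j) / ∑ m, exp (s m) = 1 / (∑ k, exp (-(s j - s (j.succAbove k))) + 1) := by
  have hsum : ∑ m, exp (s m) = (∑ k, exp (-(s j - s (j.succAbove k))) + 1) * exp (s j) := by
    rw [Fin.sum_univ_succAbove _ j, add_mul, sum_mul]
    simp only [← exp_add, neg_sub, sub_add_cancel, one_mul]
    ring
  rw [hsum, div_mul_cancel_right₀ (exp_pos _).ne', one_div]

theorem stmt_9_general {Ω : Type*} [MeasurableSpace Ω] (P : Measure Ω) [IsProbabilityMeasure P]
    (N : ℕ) (s : Fin N → ℝ) (v : Fin N → Ω → ℝ)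
    (hmeas : ∀ n, Measurable (v n))
    (hindep : ProbabilityTheory.iIndepFun v P)
    (hcdf : ∀ n (t : ℝ), P {ω | v n ω ≤ t} = ENNReal.ofReal (Real.exp (-Real.exp (-t)))) :
    ∀ j : Fin N, P {ω | ∀ n, n ≠ j → s n + v n ω < s j + v j ω} =
      ENNReal.ofReal (Real.exp (s j) / ∑ m, Real.exp (s m)) := by
  intro j
  obtain ⟨M, rfl⟩ := Nat.exists_eq_add_one_of_ne_zero j.pos.ne'
  have hlaw : P.map (fun ω n => v n ω) = Measure.pi fun _ => gumbelMeasure := by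
    rw [hindep.map_fun_eq_pi_map fun n => (hmeas n).aemeasurable]
    exact congrArg Measure.pi (funext fun n => map_eq_gumbelMeasure (hmeas n) (hcdf n))
  have hevent : {ω | ∀ n, n ≠ j → s n + v n ω < s j + v j ω} = (fun ω n => v n ω) ⁻¹'
      {x | ∀ k, x (j.succAbove k) < x j + (s j - s (j.succAbove k))} := by
    ext ω
    simp only [Set.mem_ofPred_eq, Set.mem_preimage, Fin.forall_iff_succAbove j, ne_eq,
      not_true_eq_false, IsEmpty.forall_iff, Fin.succAbove_ne, not_false_eq_true, forall_const,
      true_and]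
    exact forall_congr' fun k => by constructor <;> intro h <;> linarith
  rw [hevent, ← Measure.map_apply (measurable_pi_lambda _ hmeas)
    (measurableSet_setOf_forall_succAbove_lt j _), hlaw, Measure.pi_setOf_forall_succAbove_lt]
  simp_rw [gumbelMeasure_Iio, ← ENNReal.ofReal_prod_of_nonneg fun k _ => (gumbelCDF_pos _).le,
    prod_gumbelCDF_add]
  rw [lintegral_gumbelCDF_rpow (by positivity), exp_div_sum_exp_eq]

/-- Gumbel-max trick: the argmax of Gumbel-perturbed scores is distributed according to
the softmax of the scores. -/
theorem stmt_9 {Ω : Type*} [MeasurableSpace Ω] (P : Measure Ω) [IsProbabilityMeasure P]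
    (N : ℕ) (hN : 1 ≤ N) (s : Fin N → ℝ) (v : Fin N → Ω → ℝ)
    (hmeas : ∀ n, Measurable (v n))
    (hindep : ProbabilityTheory.iIndepFun v P)
    (hcdf : ∀ n (t : ℝ), P {ω | v n ω ≤ t} = ENNReal.ofReal (Real.exp (-Real.exp (-t)))) :
    ∀ j : Fin N, P {ω | ∀ n, n ≠ j → s n + v n ω < s j + v j ω} =
      ENNReal.ofReal (Real.exp (s j) / ∑ m, Real.exp (s m)) :=
  stmt_9_general P N s v hmeas hindep hcdf
end

section
/- Continuity of the penalized solution bound: if F is L-Lipschitz and G satisfies the Hölderian error bound dist(θ, S₀) ≤ c·(G(θ) − inf G)^{1/α} with α > 1, then the value function V(δ) = inf_{S_δ} F satisfies V(0) − V(δ) ≤ L·c·δ^{1/α} for all δ ≥ 0; in particular V is continuous at δ = 0. -/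
open Real Set

/-- Under the Hölderian error bound and Lipschitzness of F, the bilevel value function
is continuous at δ = 0: V(0) − V(δ) ≤ L·c·δ^(1/α). -/
theorem stmt_16 (n : ℕ) (F G : EuclideanSpace ℝ (Fin n) → ℝ)
    (hG : BddBelow (Set.range G)) (hF : BddBelow (Set.range F))
    (S₀ : Set (EuclideanSpace ℝ (Fin n)))
    (hS₀ : S₀ = {θ | G θ - sInf (Set.range G) = 0})
    (hS₀ne : S₀.Nonempty)
    (L : ℝ) (hL : 0 ≤ L) (hFLip : ∀ a b, |F a - F b| ≤ L * ‖a - b‖)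
    (c α : ℝ) (hc : 0 < c) (hα : 1 < α)
    (hHolder : ∀ θ, Metric.infDist θ S₀ ≤ c * (G θ - sInf (Set.range G)) ^ (1 / α)) :
    ∀ δ : ℝ, 0 ≤ δ →
      sInf (F '' {θ | G θ - sInf (Set.range G) ≤ 0}) -
          sInf (F '' {θ | G θ - sInf (Set.range G) ≤ δ}) ≤
        L * c * δ ^ (1 / α) := by
  intro δ hδ
  set m := sInf (Set.range G) with hm
  have hmle : ∀ θ, m ≤ G θ := fun θ => csInf_le hG ⟨θ, rfl⟩
  have hset0 : {θ | G θ - m ≤ 0} = S₀ := by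
    ext θ
    simp only [hS₀, Set.mem_setOf_eq]
    constructor
    · intro h; linarith [hmle θ]
    · intro h; linarith
  have hFbdd : ∀ s : Set (EuclideanSpace ℝ (Fin n)), BddBelow (F '' s) :=
    fun s => hF.mono (Set.image_subset_range F s)
  have hα0 : 0 < 1 / α := by positivity
  -- Key: for θ with G θ - m ≤ δ, sInf (F '' S₀) ≤ F θ + L * c * δ^(1/α)
  have key : ∀ θ, G θ - m ≤ δ → sInf (F '' S₀) ≤ F θ + L * c * δ ^ (1 / α) := by
    intro θ hθ
    have hdist : Metric.infDist θ S₀ ≤ c * δ ^ (1 / α) := by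
      refine (hHolder θ).trans ?_
      exact mul_le_mul_of_nonneg_left (Real.rpow_le_rpow (by linarith [hmle θ]) hθ hα0.le) hc.le
    -- sInf (F '' S₀) ≤ F θ + L * infDist θ S₀ + L*ε for all ε > 0
    have h1 : sInf (F '' S₀) ≤ F θ + L * Metric.infDist θ S₀ := by
      refine le_of_forall_pos_le_add ?_
      intro ε hε
      rcases (lt_or_ge L 0) with hL' | hLpos
      · linarith
      by_cases hLz : L = 0
      · obtain ⟨θ', hθ'⟩ := hS₀ne
        have := csInf_le (hFbdd S₀) ⟨θ', hθ', rfl⟩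
        have h2' := (abs_le.1 (hFLip θ' θ)).2
        rw [hLz, zero_mul] at h2'
        rw [hLz]
        linarith
      have hLp : 0 < L := lt_of_le_of_ne hLpos (Ne.symm hLz)
      have : Metric.infDist θ S₀ < Metric.infDist θ S₀ + ε / L :=
        lt_add_of_pos_right _ (by positivity)
      obtain ⟨θ', hθ'S, hd⟩ := (Metric.infDist_lt_iff hS₀ne).1 this
      have h2 := hFLip θ' θ
      rw [abs_le] at h2
      have h3 : sInf (F '' S₀) ≤ F θ' := csInf_le (hFbdd S₀) ⟨θ', hθ'S, rfl⟩
      have hd' : ‖θ' - θ‖ < Metric.infDist θ S₀ + ε / L := by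
        rwa [dist_comm, dist_eq_norm] at hd
      have h4 : F θ' - F θ ≤ L * (Metric.infDist θ S₀ + ε / L) := by
        calc F θ' - F θ ≤ L * ‖θ' - θ‖ := h2.2
          _ ≤ L * (Metric.infDist θ S₀ + ε / L) := by gcongr
      have : L * (ε / L) = ε := by field_simp
      nlinarith
    calc sInf (F '' S₀) ≤ F θ + L * Metric.infDist θ S₀ := h1
      _ ≤ F θ + L * (c * δ ^ (1 / α)) := by gcongr
      _ = F θ + L * c * δ ^ (1 / α) := by ring
  rw [hset0]
  have hSδne : (F '' {θ | G θ - m ≤ δ}).Nonempty := by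
    obtain ⟨θ', hθ'⟩ := hS₀ne
    rw [hS₀] at hθ'
    have hθ'' : G θ' - m = 0 := hθ'
    exact ⟨F θ', ⟨θ', by simp only [Set.mem_setOf_eq]; linarith, rfl⟩⟩
  have hlb : sInf (F '' S₀) - L * c * δ ^ (1 / α) ≤ sInf (F '' {θ | G θ - m ≤ δ}) := by
    refine le_csInf hSδne ?_
    rintro b ⟨θ, hθ, rfl⟩
    have := key θ hθ
    linarith
  linarith
end
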